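/- arXiv:0705.4309 — 2 statements merged into one kernel-verified Lean document; each statement's English description precedes it below -/
import Mathlib

section
/- Fix d,r,t∈ℕ and p∈[1,∞]. Let Φ=(φ^1,…,φ^r) with each φ^i∈W₀^1, let μ⃗=(μ^1,…,μ^t) be a vector of finite complex Borel measures on ℝ^d, and let X={x_j : j∈J} be separated with constant δ>0. Then for every ε>0 there exists γ>0 such that for every family Δ={δ_j}_{j∈J}⊂ℝ^d with sup_{j∈J}|δ_j| < γ and every C=(c^1,…,c^r)∈(ℓ^p(ℤ^d))^{(r)}, ∑_{l=1}^t ‖((f_C∗μ^l)(x_j) − (f_C∗μ^l)(x_j+δ_j))_{j∈J}‖_{ℓ^p(J)} ≤ ε‖C‖, where f_C = ∑_{k∈ℤ^d}∑_{i=1}^r c^i(k)φ^i(·−k); in other words, the sampling operators satisfy ‖U−U_Δ‖ → 0 as sup_j|δ_j| → 0. -/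
/-!
For `‖δ‖ ≤ γ` one has `|f_C(z + δ) - f_C(z)| ≤ ∑_{i,k} |c^i(k)| osc_γ φ^i (z - k)`, where
`osc_γ φ (z) = sup_{|u| ≤ γ} |φ(z + u) - φ(z)|`. Integrating against `|μ^l|` and sampling at `X`
bounds the jitter error by the kernel `(j, (i, k)) ↦ (osc_γ φ^i ∗ |μ^l|)(x_j - k)` applied to
`(|c^i(k)|)`. Its row sums are at most `‖μ^l‖` times the amalgam norm
`∑_m sup_{[-1,1]^d + m} osc_γ φ^i`, and its column sums at most that times the largest number of
points of `X` in a unit cube, which is finite by separation; so by the Schur test the error is at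
most a constant times this amalgam norm times `‖C‖`. Finally the amalgam norm of `osc_γ φ^i` tends
to `0` with `γ` by dominated convergence: each term does by uniform continuity of `φ^i` on
compact sets, and all are dominated by `2 sup_{[-2,2]^d + m} |φ^i|`, summable as `φ^i ∈ W₀^1`.
-/

open MeasureTheory ENNReal

noncomputable section

abbrev Euc (d : ℕ) := EuclideanSpace ℝ (Fin d)

/-- Embedding of `ℤ^d` into `ℝ^d`. -/
def zemb {d : ℕ} (k : Fin d → ℤ) : Euc d := WithLp.toLp 2 (fun i => (k i : ℝ))

/-- `ess sup_{x ∈ [0,1]^d} |f(x+k)|`, valued in `ℝ≥0∞`. -/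
def cubeSup {d : ℕ} (f : Euc d → ℂ) (k : Fin d → ℤ) : ℝ≥0∞ :=
  essSup (fun x => (‖f (x + zemb k)‖₊ : ℝ≥0∞))
    (volume.restrict {x : Euc d | ∀ i, x i ∈ Set.Icc (0:ℝ) 1})

/-- The Wiener amalgam norm `‖f‖_{W^p}`. -/
def WNorm {d : ℕ} (p : ℝ≥0∞) (f : Euc d → ℂ) : ℝ≥0∞ :=
  if p = ∞ then ⨆ k : Fin d → ℤ, cubeSup f k
  else (∑' k : Fin d → ℤ, cubeSup f k ^ p.toReal) ^ (1 / p.toReal)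

/-- Membership in `W₀^1`: continuous with finite `W^1` norm. -/
def MemW01 {d : ℕ} (f : Euc d → ℂ) : Prop := Continuous f ∧ WNorm 1 f < ∞

/-- `(W^1)^{(r)}` norm of a vector of functions. -/
def WNormVec {d r : ℕ} (Φ : Fin r → Euc d → ℂ) : ℝ≥0∞ := ∑ i, WNorm 1 (Φ i)

/-- the `ℓ^p` norm of a family of complex numbers, valued in `ℝ≥0∞`. -/
def lpNorm {ι : Type*} (p : ℝ≥0∞) (c : ι → ℂ) : ℝ≥0∞ :=
  if p = ∞ then ⨆ j, (‖c j‖₊ : ℝ≥0∞)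
  else (∑' j, (‖c j‖₊ : ℝ≥0∞) ^ p.toReal) ^ (1 / p.toReal)

/-- The `(ℓ^p(ℤ^d))^{(r)}` norm `‖C‖ = ∑_i ‖c^i‖_{ℓ^p}`. -/
def vlpNorm {d r : ℕ} (p : ℝ≥0∞) (C : Fin r → (Fin d → ℤ) → ℂ) : ℝ≥0∞ :=
  ∑ i, lpNorm p (C i)

/-- `f_C = ∑_{k ∈ ℤ^d} ∑_i c^i(k) φ^i(· - k)`. -/
def genFun {d r : ℕ} (Φ : Fin r → Euc d → ℂ) (C : Fin r → (Fin d → ℤ) → ℂ)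
    (x : Euc d) : ℂ :=
  ∑' k : Fin d → ℤ, ∑ i, C i k * Φ i (x - zemb k)

/-- Integral of a complex-valued function against a finite complex Borel measure,
via the Jordan decompositions of the real and imaginary parts. -/
def cInt {d : ℕ} (μ : ComplexMeasure (Euc d)) (f : Euc d → ℂ) : ℂ :=
  ((∫ x, f x ∂(ComplexMeasure.re μ).toJordanDecomposition.posPart) -
    (∫ x, f x ∂(ComplexMeasure.re μ).toJordanDecomposition.negPart)) +
  Complex.I * ((∫ x, f x ∂(ComplexMeasure.im μ).toJordanDecomposition.posPart) -
    (∫ x, f x ∂(ComplexMeasure.im μ).toJordanDecomposition.negPart))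

/-- The convolution `(φ ∗ μ)(x) = ∫ φ(x - y) dμ(y)`. -/
def mconv {d : ℕ} (μ : ComplexMeasure (Euc d)) (φ : Euc d → ℂ) (x : Euc d) : ℂ :=
  cInt μ (fun y => φ (x - y))

/-- The total variation norm `|μ|(ℝ^d)` of a finite complex Borel measure, as the
supremum of `∑ ‖μ(S_i)‖` over finite disjoint families of measurable sets. -/
def cmNorm {d : ℕ} (μ : ComplexMeasure (Euc d)) : ℝ≥0∞ :=
  ⨆ (n : ℕ) (S : Fin n → Set (Euc d)) (_ : ∀ i, MeasurableSet (S i))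
    (_ : Pairwise (Function.onFun Disjoint S)), ∑ i, (‖μ (S i)‖₊ : ℝ≥0∞)

/-- norm of a vector of complex measures. -/
def cmNormVec {d t : ℕ} (μ : Fin t → ComplexMeasure (Euc d)) : ℝ≥0∞ :=
  ∑ l, cmNorm (μ l)

/-- The Riesz condition with explicit constants. -/
def RieszWith {d r : ℕ} (p : ℝ≥0∞) (Φ : Fin r → Euc d → ℂ) (m M : ℝ) : Prop :=
  0 < m ∧ m ≤ M ∧ ∀ C : Fin r → (Fin d → ℤ) → ℂ, vlpNorm p C < ∞ →
    ENNReal.ofReal m * vlpNorm p C ≤ eLpNorm (genFun Φ C) p volume ∧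
    eLpNorm (genFun Φ C) p volume ≤ ENNReal.ofReal M * vlpNorm p C

/-- The Riesz (unconditional basis) condition for `p`. -/
def RieszCond {d r : ℕ} (p : ℝ≥0∞) (Φ : Fin r → Euc d → ℂ) : Prop :=
  ∃ m M : ℝ, RieszWith p Φ m M

/-- `X` is a `μ⃗`-sampling set for `V^p(Φ)`. -/
def SamplingSet {d r t : ℕ} {J : Type*} (p : ℝ≥0∞) (Φ : Fin r → Euc d → ℂ)
    (μ : Fin t → ComplexMeasure (Euc d)) (X : J → Euc d) : Prop :=
  ∃ A B : ℝ, 0 < A ∧ A ≤ B ∧ ∀ C : Fin r → (Fin d → ℤ) → ℂ, vlpNorm p C < ∞ →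
    ENNReal.ofReal A * eLpNorm (genFun Φ C) p volume ≤
      ∑ l, lpNorm p (fun j => mconv (μ l) (genFun Φ C) (X j)) ∧
    ∑ l, lpNorm p (fun j => mconv (μ l) (genFun Φ C) (X j)) ≤
      ENNReal.ofReal B * eLpNorm (genFun Φ C) p volume

/-- `X` is separated with constant `δ`. -/
def SeparatedWith {d : ℕ} {J : Type*} (X : J → Euc d) (δ : ℝ) : Prop :=
  ∀ i j : J, i ≠ j → δ ≤ dist (X i) (X j)

def SeparatedSet {d : ℕ} {J : Type*} (X : J → Euc d) : Prop :=
  ∃ δ : ℝ, 0 < δ ∧ SeparatedWith X δ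

/-- Membership in `M_s(ℝ^d)`: `∫ (1+|x|)^s d|μ| < ∞`, expressed via the Jordan
decompositions of the real and imaginary parts. -/
def MemMs {d : ℕ} (s : ℝ) (μ : ComplexMeasure (Euc d)) : Prop :=
  (∫⁻ x, ENNReal.ofReal ((1 + ‖x‖) ^ s) ∂(ComplexMeasure.re μ).toJordanDecomposition.posPart < ∞) ∧
  (∫⁻ x, ENNReal.ofReal ((1 + ‖x‖) ^ s) ∂(ComplexMeasure.re μ).toJordanDecomposition.negPart < ∞) ∧
  (∫⁻ x, ENNReal.ofReal ((1 + ‖x‖) ^ s) ∂(ComplexMeasure.im μ).toJordanDecomposition.posPart < ∞) ∧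
  (∫⁻ x, ENNReal.ofReal ((1 + ‖x‖) ^ s) ∂(ComplexMeasure.im μ).toJordanDecomposition.negPart < ∞)

/-- `Φ ∈ W_s`: an `s`-localized Riesz generator. -/
def MemWs {d r : ℕ} (s : ℝ) (Φ : Fin r → Euc d → ℂ) : Prop :=
  (∀ i, MemW01 (Φ i)) ∧ RieszCond 2 Φ ∧
    ∀ i, ∃ C0 : ℝ, 0 < C0 ∧ ∀ x : Euc d, ‖Φ i x‖ ≤ C0 * (1 + ‖x‖) ^ (-s)

end

open Filter Topology

noncomputable section

namespace SamplingJitter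

variable {d : ℕ}

lemma zemb_add (m n : Fin d → ℤ) : zemb (m + n) = zemb m + zemb n := by
  ext i; simp [zemb]

lemma zemb_sub (m n : Fin d → ℤ) : zemb (m - n) = zemb m - zemb n := by
  ext i; simp [zemb]

def cube (a b : ℝ) : Set (Euc d) := {x | ∀ i, x i ∈ Set.Icc a b}

def floorVec (x : Euc d) : Fin d → ℤ := fun i => ⌊x i⌋

lemma measurable_floorVec : Measurable (floorVec (d := d)) :=
  measurable_pi_iff.2 fun i =>
    Int.measurable_floor.comp ((continuous_apply i).comp (PiLp.continuous_ofLp 2 _)).measurable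

lemma sub_zemb_floorVec_mem_cube (x : Euc d) : x - zemb (floorVec x) ∈ cube (0 : ℝ) 1 := fun i =>
  ⟨sub_nonneg.2 (Int.floor_le (x i)), by
    change x i - ⌊x i⌋ ≤ 1; linarith [Int.lt_floor_add_one (x i)]⟩

lemma norm_le_sqrt_of_mem_cube {x : Euc d} (hx : x ∈ cube (0 : ℝ) 1) : ‖x‖ ≤ √d := by
  rw [EuclideanSpace.norm_eq]
  refine Real.sqrt_le_sqrt ?_
  calc ∑ i, ‖x i‖ ^ 2 ≤ ∑ _i : Fin d, (1 : ℝ) := Finset.sum_le_sum fun i _ => by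
        rw [Real.norm_eq_abs, sq_abs]; nlinarith [(hx i).1, (hx i).2]
    _ = d := by simp

lemma isCompact_cube (a b : ℝ) : IsCompact (cube a b : Set (Euc d)) := by
  let e := PiLp.homeomorph 2 (fun _ : Fin d => ℝ)
  have h : (cube a b : Set (Euc d)) = e ⁻¹' Set.univ.pi fun _ => Set.Icc a b := by
    ext x; simp [cube, e, PiLp.homeomorph, Pi.le_def, forall_and]
  rw [h, e.isCompact_preimage]
  exact isCompact_univ_pi fun _ => isCompact_Icc

lemma cube_subset_closure_openCube :
    cube (0 : ℝ) 1 ⊆ closure {x : Euc d | ∀ i, x i ∈ Set.Ioo (0 : ℝ) 1} := by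
  let e := PiLp.homeomorph 2 (fun _ : Fin d => ℝ)
  have h : {x : Euc d | ∀ i, x i ∈ Set.Ioo (0 : ℝ) 1} =
      e ⁻¹' Set.univ.pi fun _ => Set.Ioo 0 1 := by
    ext x; simp [e, PiLp.homeomorph]
  rw [h, ← e.preimage_closure, closure_pi_set, closure_Ioo zero_ne_one]
  exact fun x hx i _ => hx i

lemma le_essSup_restrict_cube {h : Euc d → ℝ≥0∞} (hc : Continuous h) {x : Euc d}
    (hx : x ∈ cube (0 : ℝ) 1) : h x ≤ essSup h (volume.restrict (cube 0 1)) := by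
  by_contra hlt
  let U := h ⁻¹' Set.Ioi (essSup h (volume.restrict (cube 0 1)))
  have hU : IsOpen U := isOpen_Ioi.preimage hc
  have hUc : volume (U ∩ cube 0 1) = 0 := by
    rw [← Measure.restrict_apply hU.measurableSet]
    exact meas_essSup_lt (f := h)
  obtain ⟨y, hyU, hy⟩ :=
    mem_closure_iff.1 (cube_subset_closure_openCube hx) U hU (not_le.1 hlt)
  have hopen : IsOpen {x : Euc d | ∀ i, x i ∈ Set.Ioo (0 : ℝ) 1} := by
    simp only [Set.ofPred_forall]
    exact isOpen_iInter_of_finite fun i =>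
      isOpen_Ioo.preimage ((continuous_apply i).comp (PiLp.continuous_ofLp 2 _))
  refine ((hU.inter hopen).measure_pos volume ⟨y, hyU, hy⟩).ne' (measure_mono_null ?_ hUc)
  exact Set.inter_subset_inter_right _ fun z hz i => Set.Ioo_subset_Icc_self (hz i)

def localSup (a b : ℝ) (g : Euc d → ℝ≥0∞) (m : Fin d → ℤ) : ℝ≥0∞ :=
  ⨆ v ∈ cube a b, g (v + zemb m)

/-- `amalgamSum 0 1 (‖f ·‖ₑ)` is the `W^1` norm of `f` with `sup` in place of `ess sup`. -/
def amalgamSum (a b : ℝ) (g : Euc d → ℝ≥0∞) : ℝ≥0∞ := ∑' m, localSup a b g m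

lemma le_localSup {a b : ℝ} {g : Euc d → ℝ≥0∞} {v : Euc d} (hv : v ∈ cube a b)
    (m : Fin d → ℤ) : g (v + zemb m) ≤ localSup a b g m :=
  le_iSup₂ (f := fun v (_ : v ∈ cube a b) => g (v + zemb m)) v hv

lemma tsum_comp_sub_zemb_le_amalgamSum (g : Euc d → ℝ≥0∞) (x : Euc d) :
    ∑' k, g (x - zemb k) ≤ amalgamSum 0 1 g := by
  calc ∑' k, g (x - zemb k) ≤ ∑' k, localSup 0 1 g (floorVec x - k) := by
        refine ENNReal.tsum_le_tsum fun k => ?_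
        rw [show x - zemb k = (x - zemb (floorVec x)) + zemb (floorVec x - k) by
          rw [zemb_sub]; abel]
        exact le_localSup (sub_zemb_floorVec_mem_cube x) _
    _ = amalgamSum 0 1 g := (Equiv.subLeft (floorVec x)).tsum_eq (localSup 0 1 g)

lemma tsum_prod_comp_sub_zemb_le {ι : Type*} [Fintype ι] (T : ι → Euc d → ℝ≥0∞) (x : Euc d) :
    ∑' ik : ι × (Fin d → ℤ), T ik.1 (x - zemb ik.2) ≤ ∑ i, amalgamSum 0 1 (T i) := by
  rw [ENNReal.tsum_prod (f := fun i k => T i (x - zemb k)), tsum_fintype]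
  exact Finset.sum_le_sum fun i _ => tsum_comp_sub_zemb_le_amalgamSum (T i) x

lemma localSup_le_sum_localSup {n₁ n₂ : ℤ} (hn : n₁ ≤ n₂) {a b : ℝ} (ha : (n₁ : ℝ) ≤ a)
    (hb : b ≤ n₂ + 1) (g : Euc d → ℝ≥0∞) (m : Fin d → ℤ) :
    localSup a b g m ≤ ∑ s ∈ Finset.Icc (fun _ => n₁) (fun _ => n₂), localSup 0 1 g (m + s) := by
  refine iSup₂_le fun v hv => ?_
  let s : Fin d → ℤ := fun i => min n₂ ⌊v i⌋
  have hs : s ∈ Finset.Icc (fun _ => n₁) (fun _ => n₂) :=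
    Finset.mem_Icc.2 ⟨fun i => le_min hn (Int.le_floor.2 (ha.trans (hv i).1)),
      fun i => min_le_left _ _⟩
  have hvs : v - zemb s ∈ cube (0 : ℝ) 1 := by
    intro i
    change v i - ((min n₂ ⌊v i⌋ : ℤ) : ℝ) ∈ Set.Icc 0 1
    rcases le_total ⌊v i⌋ n₂ with h | h
    · rw [min_eq_right h]
      exact ⟨sub_nonneg.2 (Int.floor_le _), by linarith [Int.lt_floor_add_one (v i)]⟩
    · rw [min_eq_left h]
      have : (n₂ : ℝ) ≤ ⌊v i⌋ := by exact_mod_cast h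
      exact ⟨by linarith [Int.floor_le (v i)], by linarith [(hv i).2]⟩
  calc g (v + zemb m) = g ((v - zemb s) + zemb (m + s)) := by rw [zemb_add]; abel_nf
    _ ≤ localSup 0 1 g (m + s) := le_localSup hvs _
    _ ≤ _ := Finset.single_le_sum (f := fun s => localSup 0 1 g (m + s)) (fun _ _ => zero_le) hs

lemma amalgamSum_le_card_mul {n₁ n₂ : ℤ} (hn : n₁ ≤ n₂) {a b : ℝ} (ha : (n₁ : ℝ) ≤ a)
    (hb : b ≤ n₂ + 1) (g : Euc d → ℝ≥0∞) :
    amalgamSum a b g ≤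
      (Finset.Icc (fun _ => n₁ : Fin d → ℤ) (fun _ => n₂)).card * amalgamSum 0 1 g := by
  calc amalgamSum a b g
      ≤ ∑' m, ∑ s ∈ Finset.Icc (fun _ => n₁) (fun _ => n₂), localSup 0 1 g (m + s) :=
        ENNReal.tsum_le_tsum (localSup_le_sum_localSup hn ha hb g)
    _ = ∑ s ∈ Finset.Icc (fun _ => n₁) (fun _ => n₂), ∑' m, localSup 0 1 g (m + s) :=
        Summable.tsum_finsetSum fun _ _ => ENNReal.summable
    _ = _ := by
        have hshift (s : Fin d → ℤ) : ∑' m, localSup 0 1 g (m + s) = amalgamSum 0 1 g :=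
          (Equiv.addRight s).tsum_eq _
        simp only [hshift, Finset.sum_const, nsmul_eq_mul]

lemma amalgamSum_lintegral_comp_sub_le (θ : Measure (Euc d)) (g : Euc d → ℝ≥0∞) :
    amalgamSum 0 1 (fun w => ∫⁻ y, g (w - y) ∂θ) ≤ θ Set.univ * amalgamSum (-1) 1 g := by
  have hpt : ∀ m (v : Euc d), v ∈ cube (0 : ℝ) 1 → ∀ y,
      g (v + zemb m - y) ≤ localSup (-1) 1 g (m - floorVec y) := by
    intro m v hv y
    have hy := sub_zemb_floorVec_mem_cube y
    rw [show v + zemb m - y = (v - (y - zemb (floorVec y))) + zemb (m - floorVec y) by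
      rw [zemb_sub]; abel]
    refine le_localSup (fun i => ?_) _
    change v i - (y - zemb (floorVec y)) i ∈ Set.Icc (-1) 1
    constructor <;> linarith [(hy i).1, (hy i).2, (hv i).1, (hv i).2]
  calc amalgamSum 0 1 (fun w => ∫⁻ y, g (w - y) ∂θ)
      ≤ ∑' m, ∫⁻ y, localSup (-1) 1 g (m - floorVec y) ∂θ :=
        ENNReal.tsum_le_tsum fun m => iSup₂_le fun v hv => lintegral_mono (hpt m v hv)
    _ = ∫⁻ y, ∑' m, localSup (-1) 1 g (m - floorVec y) ∂θ :=
        (lintegral_tsum fun m => ((measurable_of_countable (localSup (-1) 1 g)).comp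
          (measurable_const.sub measurable_floorVec)).aemeasurable).symm
    _ = θ Set.univ * amalgamSum (-1) 1 g := by
        have hshift (y : Euc d) :
            ∑' m, localSup (-1) 1 g (m - floorVec y) = amalgamSum (-1) 1 g :=
          (Equiv.subRight (floorVec y)).tsum_eq _
        simp only [hshift, lintegral_const, mul_comm]

lemma amalgamSum_le_WNorm {f : Euc d → ℂ} (hf : Continuous f) :
    amalgamSum 0 1 (fun x => ‖f x‖ₑ) ≤ WNorm 1 f := by
  simp only [WNorm, one_ne_top, if_false, toReal_one, rpow_one, div_one]
  refine ENNReal.tsum_le_tsum fun m => iSup₂_le fun v hv => ?_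
  exact le_essSup_restrict_cube (h := fun x => ‖f (x + zemb m)‖₊)
    (by fun_prop) hv

section Counting

variable {J : Type*} {X : J → Euc d} {δ : ℝ}

/-- The balls of radius `δ / 2` about the points of `X` in one unit cube are disjoint and lie in a
ball of radius `√d + δ`. -/
lemma card_mul_le_of_separatedWith (hδ : 0 < δ) (hX : SeparatedWith X δ) {m : Fin d → ℤ}
    {s : Finset J} (hs : ∀ j ∈ s, floorVec (X j) = m) :
    (s.card : ℝ) * (δ / 2) ^ d ≤ (√d + δ) ^ d := by
  have hball (x : Euc d) {r : ℝ} (hr : 0 < r) : volume (Metric.ball x r) =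
      ENNReal.ofReal (r ^ d) * volume (Metric.ball (0 : Euc d) 1) := by
    rw [Measure.addHaar_ball_of_pos _ _ hr, finrank_euclideanSpace_fin]
  have hV0 : volume (Metric.ball (0 : Euc d) 1) ≠ 0 :=
    (Metric.isOpen_ball.measure_pos _ ⟨0, Metric.mem_ball_self one_pos⟩).ne'
  have hVtop : volume (Metric.ball (0 : Euc d) 1) ≠ ∞ := measure_ball_lt_top.ne
  have hsub : ⋃ j ∈ s, Metric.ball (X j) (δ / 2) ⊆ Metric.ball (zemb m) (√d + δ) := by
    refine Set.iUnion₂_subset fun j hj z hz => ?_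
    have hXj : dist (X j) (zemb m) ≤ √d := by
      rw [dist_eq_norm, ← hs j hj]
      exact norm_le_sqrt_of_mem_cube (sub_zemb_floorVec_mem_cube _)
    rw [Metric.mem_ball] at hz ⊢
    linarith [dist_triangle z (X j) (zemb m)]
  have hvol : ∑ j ∈ s, volume (Metric.ball (X j) (δ / 2)) ≤
      volume (Metric.ball (zemb m) (√d + δ)) := by
    rw [← measure_biUnion_finset (fun i _ j _ hij => Metric.ball_disjoint_ball (by
      linarith [hX i j hij])) fun _ _ => measurableSet_ball]
    exact measure_mono hsub
  simp only [hball _ (half_pos hδ), hball _ (by positivity : 0 < √d + δ), Finset.sum_const,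
    nsmul_eq_mul, ← mul_assoc] at hvol
  rw [ENNReal.mul_le_mul_iff_left hV0 hVtop, ← ENNReal.ofReal_natCast,
    ← ENNReal.ofReal_mul (by positivity), ENNReal.ofReal_le_ofReal_iff (by positivity)] at hvol
  exact hvol

lemma exists_encard_floorVec_fiber_le (hδ : 0 < δ) (hX : SeparatedWith X δ) :
    ∃ N : ℕ, ∀ m, {j | floorVec (X j) = m}.encard ≤ N := by
  refine ⟨⌊(√d + δ) ^ d / (δ / 2) ^ d⌋₊, fun m => ?_⟩
  by_contra! hlt
  obtain ⟨t, hts, htcard⟩ := Set.exists_subset_encard_eq (Order.add_one_le_of_lt hlt)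
  have htfin : t.Finite := Set.finite_of_encard_eq_coe (by rw [htcard]; rfl)
  have hcard : htfin.toFinset.card = ⌊(√d + δ) ^ d / (δ / 2) ^ d⌋₊ + 1 := by
    rw [← Nat.cast_inj (R := ℕ∞), ← Set.encard_coe_eq_coe_finsetCard, Set.Finite.coe_toFinset,
      htcard]; rfl
  have := card_mul_le_of_separatedWith hδ hX (s := htfin.toFinset)
    (fun j hj => hts (htfin.mem_toFinset.1 hj))
  rw [hcard, ← le_div_iff₀ (by positivity)] at this
  push_cast at this
  linarith [Nat.lt_floor_add_one ((√d + δ) ^ d / (δ / 2) ^ d)]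

lemma tsum_comp_sub_zemb_le_mul_amalgamSum {N : ℕ}
    (hN : ∀ m, {j | floorVec (X j) = m}.encard ≤ N) (g : Euc d → ℝ≥0∞) (k : Fin d → ℤ) :
    ∑' j, g (X j - zemb k) ≤ N * amalgamSum 0 1 g := by
  rw [← ENNReal.tsum_fiberwise _ (floorVec ∘ X)]
  calc ∑' m, ∑' j : (floorVec ∘ X) ⁻¹' {m}, g (X j - zemb k)
      ≤ ∑' m, ∑' _j : (floorVec ∘ X) ⁻¹' {m}, localSup 0 1 g (m - k) := by
        refine ENNReal.tsum_le_tsum fun m => ENNReal.tsum_le_tsum fun j => ?_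
        have hj : floorVec (X j) = m := j.2
        rw [show X j - zemb k = (X j - zemb (floorVec (X j))) + zemb (m - k) by
          rw [zemb_sub, hj]; abel]
        exact le_localSup (sub_zemb_floorVec_mem_cube _) _
    _ ≤ ∑' m, N * localSup 0 1 g (m - k) := by
        refine ENNReal.tsum_le_tsum fun m => ?_
        rw [ENNReal.tsum_set_const]
        gcongr
        exact_mod_cast hN m
    _ = N * amalgamSum 0 1 g := by
        rw [ENNReal.tsum_mul_left, amalgamSum]
        congr 1
        exact (Equiv.subRight k).tsum_eq _

end Counting

section SequenceNorm

variable {ι κ : Type*} {p : ℝ≥0∞}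

/-- `lpNorm p c` unfolds to `elpNorm p (‖c ·‖ₑ)`. -/
def elpNorm (p : ℝ≥0∞) (b : ι → ℝ≥0∞) : ℝ≥0∞ :=
  if p = ∞ then ⨆ j, b j else (∑' j, b j ^ p.toReal) ^ (1 / p.toReal)

lemma elpNorm_mono {b b' : ι → ℝ≥0∞} (h : ∀ j, b j ≤ b' j) : elpNorm p b ≤ elpNorm p b' := by
  unfold elpNorm
  split_ifs
  · exact iSup_mono h
  · gcongr with j
    exact h j

lemma one_le_toReal_of_one_le (hp : 1 ≤ p) (hp' : p ≠ ∞) : 1 ≤ p.toReal := by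
  simpa using ENNReal.toReal_mono hp' hp

lemma le_elpNorm (hp : p ≠ 0) (b : ι → ℝ≥0∞) (k : ι) : b k ≤ elpNorm p b := by
  unfold elpNorm
  split_ifs with h
  · exact le_iSup b k
  · have hp0 : 0 < p.toReal := ENNReal.toReal_pos hp h
    calc b k = (b k ^ p.toReal) ^ (1 / p.toReal) := by
          rw [← ENNReal.rpow_mul, mul_one_div_cancel hp0.ne', ENNReal.rpow_one]
      _ ≤ _ := by gcongr; exact ENNReal.le_tsum k

lemma rpow_finsetSum_le_finsetSum_rpow (s : Finset ι) (f : ι → ℝ≥0∞) {t : ℝ} (h0 : 0 < t)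
    (h1 : t ≤ 1) : (∑ i ∈ s, f i) ^ t ≤ ∑ i ∈ s, f i ^ t := by
  classical
  induction s using Finset.induction with
  | empty => simp [ENNReal.zero_rpow_of_pos h0]
  | insert x s hx ih =>
    rw [Finset.sum_insert hx, Finset.sum_insert hx]
    exact (ENNReal.rpow_add_le_add_rpow _ _ h0.le h1).trans (add_le_add_right ih _)

lemma elpNorm_le_sum [Fintype ι] (hp : 1 ≤ p) (a : ι × κ → ℝ≥0∞) :
    elpNorm p a ≤ ∑ i, elpNorm p (fun k => a (i, k)) := by
  unfold elpNorm
  split_ifs with h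
  · rw [iSup_prod]
    exact iSup_le fun i => Finset.single_le_sum (f := fun i => ⨆ k, a (i, k))
      (fun _ _ => zero_le) (Finset.mem_univ i)
  · have hp1 := one_le_toReal_of_one_le hp h
    rw [show ∑' ik, a ik ^ p.toReal = ∑' i, ∑' k, a (i, k) ^ p.toReal from
      ENNReal.tsum_prod (f := fun i k => a (i, k) ^ p.toReal),
      tsum_fintype]
    exact rpow_finsetSum_le_finsetSum_rpow _ _ (by positivity)
      ((div_le_one (by positivity)).2 hp1)

/-- Hölder's inequality for the exponents `P` and `P / (P - 1)`, against the weights `w`. -/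
lemma tsum_mul_rpow_le {P : ℝ} (hP : 1 ≤ P) (a w : κ → ℝ≥0∞) :
    (∑' k, a k * w k) ^ P ≤ (∑' k, a k ^ P * w k) * (∑' k, w k) ^ (P - 1) := by
  rcases hP.eq_or_lt with rfl | hP
  · simp
  let : MeasurableSpace κ := ⊤
  have hPQ : P.HolderConjugate (P / (P - 1)) := .conjExponent hP
  set Q := P / (P - 1)
  have hP0 : 0 < P := one_pos.trans hP
  have hQ0 : 0 < Q := hPQ.symm.pos
  have hsplit (k : κ) : a k * w k = (a k * w k ^ (1 / P)) * w k ^ (1 / Q) := by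
    rw [mul_assoc, ← ENNReal.rpow_add_of_nonneg _ _ (by positivity) (by positivity),
      one_div, one_div, hPQ.inv_add_inv_eq_one, ENNReal.rpow_one]
  have hHolder : ∑' k, a k * w k ≤ (∑' k, a k ^ P * w k) ^ (1 / P) * (∑' k, w k) ^ (1 / Q) := by
    have := ENNReal.lintegral_mul_le_Lp_mul_Lq Measure.count hPQ
      (f := fun k => a k * w k ^ (1 / P)) (g := fun k => w k ^ (1 / Q))
      measurable_from_top.aemeasurable measurable_from_top.aemeasurable
    simp only [lintegral_count, Pi.mul_apply, ← hsplit, ENNReal.mul_rpow_of_nonneg _ _ hP0.le,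
      ← ENNReal.rpow_mul, one_div_mul_cancel hP0.ne', one_div_mul_cancel hQ0.ne',
      ENNReal.rpow_one] at this
    exact this
  calc (∑' k, a k * w k) ^ P
      ≤ ((∑' k, a k ^ P * w k) ^ (1 / P) * (∑' k, w k) ^ (1 / Q)) ^ P := by gcongr
    _ = (∑' k, a k ^ P * w k) * (∑' k, w k) ^ (P - 1) := by
        rw [ENNReal.mul_rpow_of_nonneg _ _ hP0.le, ← ENNReal.rpow_mul, ← ENNReal.rpow_mul,
          one_div_mul_cancel hP0.ne', ENNReal.rpow_one]
        have : P - 1 ≠ 0 := by linarith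
        congr 2
        rw [show Q = P / (P - 1) from rfl]
        field_simp

/-- The Schur test. -/
theorem elpNorm_tsum_mul_le (hp : 1 ≤ p) (K : ι → κ → ℝ≥0∞) (a : κ → ℝ≥0∞) {R : ℝ≥0∞}
    (hrow : ∀ j, ∑' k, K j k ≤ R) (hcol : ∀ k, ∑' j, K j k ≤ R) :
    elpNorm p (fun j => ∑' k, a k * K j k) ≤ R * elpNorm p a := by
  unfold elpNorm
  split_ifs with h
  · refine iSup_le fun j => ?_
    calc ∑' k, a k * K j k ≤ ∑' k, (⨆ k', a k') * K j k := by
          gcongr with k; exact le_iSup a k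
      _ = (⨆ k', a k') * ∑' k, K j k := ENNReal.tsum_mul_left
      _ ≤ R * ⨆ k', a k' := by rw [mul_comm]; gcongr; exact hrow j
  set P := p.toReal
  have hP : 1 ≤ P := one_le_toReal_of_one_le hp h
  have hP0 : 0 < P := one_pos.trans_le hP
  have hsum : ∑' j, (∑' k, a k * K j k) ^ P ≤ R ^ P * ∑' k, a k ^ P :=
    calc ∑' j, (∑' k, a k * K j k) ^ P
        ≤ ∑' j, (∑' k, a k ^ P * K j k) * R ^ (P - 1) := by
          gcongr with j
          exact (tsum_mul_rpow_le hP _ _).trans (by gcongr; exact hrow j)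
      _ = R ^ (P - 1) * ∑' k, a k ^ P * ∑' j, K j k := by
          rw [ENNReal.tsum_mul_right, ENNReal.tsum_comm, mul_comm]
          simp only [ENNReal.tsum_mul_left]
      _ ≤ R ^ (P - 1) * ∑' k, a k ^ P * R := by gcongr with k; exact hcol k
      _ = R ^ P * ∑' k, a k ^ P := by
          have hRP : R ^ (P - 1) * R = R ^ P := by
            calc R ^ (P - 1) * R = R ^ (P - 1) * R ^ (1 : ℝ) := by rw [ENNReal.rpow_one]
              _ = R ^ P := by
                rw [← ENNReal.rpow_add_of_nonneg _ _ (by linarith) zero_le_one, sub_add_cancel]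
          rw [ENNReal.tsum_mul_right, mul_comm _ R, ← mul_assoc, hRP]
  calc (∑' j, (∑' k, a k * K j k) ^ P) ^ (1 / P)
      ≤ (R ^ P * ∑' k, a k ^ P) ^ (1 / P) := by gcongr
    _ = R * (∑' k, a k ^ P) ^ (1 / P) := by
        rw [ENNReal.mul_rpow_of_nonneg _ _ (by positivity), ← ENNReal.rpow_mul,
          mul_one_div_cancel hP0.ne', ENNReal.rpow_one]

lemma tendsto_tsum_of_dominated_convergence {α : Type*} {l : Filter α}
    [l.IsCountablyGenerated] {F : α → ι → ℝ≥0∞} {f : ι → ℝ≥0∞} (bound : ι → ℝ≥0∞)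
    (h_bound : ∀ᶠ a in l, ∀ i, F a i ≤ bound i) (h_fin : ∑' i, bound i ≠ ∞)
    (h_lim : ∀ i, Tendsto (fun a => F a i) l (𝓝 (f i))) :
    Tendsto (fun a => ∑' i, F a i) l (𝓝 (∑' i, f i)) := by
  let : MeasurableSpace ι := ⊤
  simp only [← lintegral_count]
  exact tendsto_lintegral_filter_of_dominated_convergence bound
    (.of_forall fun _ => measurable_from_top) (h_bound.mono fun _ h => .of_forall h)
    (by rwa [lintegral_count]) (.of_forall h_lim)

end SequenceNorm

def osc (φ : Euc d → ℂ) (γ : ℝ) (z : Euc d) : ℝ≥0∞ :=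
  ⨆ u ∈ Metric.closedBall (0 : Euc d) γ, ‖φ (z + u) - φ z‖ₑ

lemma enorm_sub_le_osc {φ : Euc d → ℂ} {γ : ℝ} {u : Euc d} (hu : ‖u‖ ≤ γ) (z : Euc d) :
    ‖φ (z + u) - φ z‖ₑ ≤ osc φ γ z :=
  le_iSup₂ (f := fun u (_ : u ∈ Metric.closedBall (0 : Euc d) γ) => ‖φ (z + u) - φ z‖ₑ) u
    (by rwa [mem_closedBall_zero_iff])

lemma measurable_osc {φ : Euc d → ℂ} (hφ : Continuous φ) (γ : ℝ) : Measurable (osc φ γ) :=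
  LowerSemicontinuous.measurable <| lowerSemicontinuous_iSup fun _ =>
    lowerSemicontinuous_iSup fun _ => (by fun_prop : Continuous _).lowerSemicontinuous

lemma tendsto_iSup_osc {φ : Euc d → ℂ} (hφ : Continuous φ) {K : Set (Euc d)}
    (hK : IsCompact K) :
    Tendsto (fun γ => ⨆ z ∈ K, osc φ γ z) (𝓝[>] 0) (𝓝 0) := by
  rw [ENNReal.tendsto_nhds_zero]
  intro ε hε
  obtain ⟨δ, hδ, hφδ⟩ := EMetric.uniformContinuousOn_iff.1
    ((hK.cthickening (r := 1)).uniformContinuousOn_of_continuous hφ.continuousOn) ε hε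
  have hsmall : ∀ᶠ γ in 𝓝 (0 : ℝ), γ < 1 ∧ ENNReal.ofReal γ < δ :=
    (gt_mem_nhds one_pos).and <|
      (ENNReal.continuous_ofReal.tendsto' 0 0 ENNReal.ofReal_zero).eventually (gt_mem_nhds hδ)
  filter_upwards [nhdsWithin_le_nhds hsmall] with γ ⟨hγ1, hγδ⟩
  refine iSup₂_le fun z hz => iSup₂_le fun u hu => ?_
  rw [mem_closedBall_zero_iff] at hu
  have hdist : dist (z + u) z = ‖u‖ := by rw [dist_eq_norm, add_sub_cancel_left]
  rw [← edist_eq_enorm_sub]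
  refine (hφδ (Metric.mem_cthickening_of_dist_le _ z _ _ hz (by linarith))
    (Metric.self_subset_cthickening K hz) ?_).le
  rw [edist_dist, hdist]
  exact (ENNReal.ofReal_le_ofReal hu).trans_lt hγδ

lemma tendsto_localSup_osc {φ : Euc d → ℂ} (hφ : Continuous φ) (m : Fin d → ℤ) :
    Tendsto (fun γ => localSup (-1) 1 (osc φ γ) m) (𝓝[>] 0) (𝓝 0) := by
  have hshift (γ : ℝ) (v : Euc d) :
      osc φ γ (v + zemb m) = osc (fun x => φ (x + zemb m)) γ v := by
    simp only [osc, add_right_comm v]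
  simp only [localSup, hshift]
  exact tendsto_iSup_osc (by fun_prop) (isCompact_cube (-1) 1)

lemma localSup_osc_le {φ : Euc d → ℂ} {γ : ℝ} (hγ : γ ≤ 1) (m : Fin d → ℤ) :
    localSup (-1) 1 (osc φ γ) m ≤ 2 * localSup (-2) 2 (fun x => ‖φ x‖ₑ) m := by
  refine iSup₂_le fun v hv => iSup₂_le fun u hu => ?_
  rw [mem_closedBall_zero_iff] at hu
  have hvu : v + u ∈ cube (-2 : ℝ) 2 := fun i => by
    have hui : |u i| ≤ 1 := (PiLp.norm_apply_le u i).trans (hu.trans hγ)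
    change v i + u i ∈ Set.Icc (-2) 2
    constructor <;> linarith [abs_le.1 hui, (hv i).1, (hv i).2]
  have hv2 : v ∈ cube (-2 : ℝ) 2 := fun i => ⟨by linarith [(hv i).1], by linarith [(hv i).2]⟩
  calc ‖φ (v + zemb m + u) - φ (v + zemb m)‖ₑ
      ≤ ‖φ ((v + u) + zemb m)‖ₑ + ‖φ (v + zemb m)‖ₑ := by
        rw [add_right_comm]; exact enorm_sub_le
    _ ≤ _ := by
        rw [two_mul]
        exact add_le_add (le_localSup hvu _) (le_localSup hv2 _)

theorem tendsto_amalgamSum_osc {φ : Euc d → ℂ} (hφ : Continuous φ)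
    (hfin : amalgamSum 0 1 (fun x => ‖φ x‖ₑ) ≠ ∞) :
    Tendsto (fun γ => amalgamSum (-1) 1 (osc φ γ)) (𝓝[>] 0) (𝓝 0) := by
  have hbound : ∑' m, 2 * localSup (-2) 2 (fun x => ‖φ x‖ₑ) m ≠ ∞ := by
    rw [ENNReal.tsum_mul_left]
    refine ENNReal.mul_ne_top ofNat_ne_top (ne_top_of_le_ne_top ?_
      (amalgamSum_le_card_mul (n₁ := -2) (n₂ := 1) (by norm_num) (by norm_num) (by norm_num) _))
    exact ENNReal.mul_ne_top (natCast_ne_top _) hfin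
  simpa [amalgamSum] using tendsto_tsum_of_dominated_convergence _
    (nhdsWithin_le_nhds ((gt_mem_nhds one_pos).mono fun γ hγ => localSup_osc_le hγ.le))
    hbound (tendsto_localSup_osc hφ)

section Generated

variable {r : ℕ} {p : ℝ≥0∞} (Φ : Fin r → Euc d → ℂ) (C : Fin r → (Fin d → ℤ) → ℂ)

lemma tsum_enorm_genFun_term_le (hp : p ≠ 0) (x : Euc d) :
    ∑' k, ‖∑ i, C i k * Φ i (x - zemb k)‖ₑ ≤
      ∑ i, lpNorm p (C i) * amalgamSum 0 1 (fun y => ‖Φ i y‖ₑ) :=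
  calc ∑' k, ‖∑ i, C i k * Φ i (x - zemb k)‖ₑ
      ≤ ∑' k, ∑ i, ‖C i k‖ₑ * ‖Φ i (x - zemb k)‖ₑ := by
        gcongr with k
        exact (enorm_sum_le _ _).trans_eq (by simp only [enorm_mul])
    _ = ∑ i, ∑' k, ‖C i k‖ₑ * ‖Φ i (x - zemb k)‖ₑ :=
        Summable.tsum_finsetSum fun _ _ => ENNReal.summable
    _ ≤ ∑ i, ∑' k, lpNorm p (C i) * ‖Φ i (x - zemb k)‖ₑ := by
        gcongr with i _ k
        exact le_elpNorm hp (fun k => ‖C i k‖ₑ) k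
    _ = ∑ i, lpNorm p (C i) * ∑' k, ‖Φ i (x - zemb k)‖ₑ := by
        simp only [ENNReal.tsum_mul_left]
    _ ≤ _ := by
        gcongr with i
        exact tsum_comp_sub_zemb_le_amalgamSum _ x

variable {Φ C}

lemma sum_lpNorm_mul_amalgamSum_ne_top (hΦfin : ∀ i, amalgamSum 0 1 (fun y => ‖Φ i y‖ₑ) ≠ ∞)
    (hC : vlpNorm p C ≠ ∞) : ∑ i, lpNorm p (C i) * amalgamSum 0 1 (fun y => ‖Φ i y‖ₑ) ≠ ∞ :=
  ENNReal.sum_ne_top.2 fun i _ => ENNReal.mul_ne_top (ne_top_of_le_ne_top hC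
    (Finset.single_le_sum (f := fun i => lpNorm p (C i)) (fun _ _ => zero_le)
      (Finset.mem_univ i))) (hΦfin i)

lemma summable_genFun_term (hp : p ≠ 0)
    (hfin : ∑ i, lpNorm p (C i) * amalgamSum 0 1 (fun y => ‖Φ i y‖ₑ) ≠ ∞) (x : Euc d) :
    Summable fun k => ∑ i, C i k * Φ i (x - zemb k) :=
  Summable.of_enorm (ne_top_of_le_ne_top hfin (tsum_enorm_genFun_term_le Φ C hp x))

lemma enorm_genFun_le (hp : p ≠ 0) (x : Euc d) :
    ‖genFun Φ C x‖ₑ ≤ ∑ i, lpNorm p (C i) * amalgamSum 0 1 (fun y => ‖Φ i y‖ₑ) :=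
  enorm_tsum_le_tsum_enorm.trans (tsum_enorm_genFun_term_le Φ C hp x)

lemma measurable_genFun (hΦ : ∀ i, Continuous (Φ i)) : Measurable (genFun Φ C) :=
  Measurable.tsum fun k => (by fun_prop : Continuous _).measurable

lemma enorm_genFun_add_sub_le (hp : p ≠ 0)
    (hfin : ∑ i, lpNorm p (C i) * amalgamSum 0 1 (fun y => ‖Φ i y‖ₑ) ≠ ∞)
    {γ : ℝ} {Δ : Euc d} (hΔ : ‖Δ‖ ≤ γ) (z : Euc d) :
    ‖genFun Φ C (z + Δ) - genFun Φ C z‖ₑ ≤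
      ∑' ik : Fin r × (Fin d → ℤ), ‖C ik.1 ik.2‖ₑ * osc (Φ ik.1) γ (z - zemb ik.2) := by
  have hswap : ∑' ik : Fin r × (Fin d → ℤ), ‖C ik.1 ik.2‖ₑ * osc (Φ ik.1) γ (z - zemb ik.2) =
      ∑' k, ∑ i, ‖C i k‖ₑ * osc (Φ i) γ (z - zemb k) := by
    rw [ENNReal.tsum_prod (f := fun i k => ‖C i k‖ₑ * osc (Φ i) γ (z - zemb k)),
      tsum_fintype (f := fun i => ∑' k, ‖C i k‖ₑ * osc (Φ i) γ (z - zemb k)),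
      Summable.tsum_finsetSum fun _ _ => ENNReal.summable]
  rw [hswap, genFun, genFun, ← (summable_genFun_term hp hfin _).tsum_sub
    (summable_genFun_term hp hfin _)]
  refine enorm_tsum_le_tsum_enorm.trans (ENNReal.tsum_le_tsum fun k => ?_)
  rw [← Finset.sum_sub_distrib]
  refine (enorm_sum_le _ _).trans (Finset.sum_le_sum fun i _ => ?_)
  rw [← mul_sub, enorm_mul, show z + Δ - zemb k = z - zemb k + Δ by abel]
  gcongr
  exact enorm_sub_le_osc hΔ _

lemma integrable_genFun_comp_sub (hp : p ≠ 0) (hΦ : ∀ i, Continuous (Φ i))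
    (hfin : ∑ i, lpNorm p (C i) * amalgamSum 0 1 (fun y => ‖Φ i y‖ₑ) ≠ ∞)
    (θ : Measure (Euc d)) [IsFiniteMeasure θ] (x : Euc d) :
    Integrable (fun y => genFun Φ C (x - y)) θ := by
  refine ⟨((measurable_genFun hΦ).comp (measurable_const.sub measurable_id)).aestronglyMeasurable,
    (lintegral_mono fun y => enorm_genFun_le hp (x - y)).trans_lt ?_⟩
  rw [lintegral_const]
  exact ENNReal.mul_lt_top hfin.lt_top (measure_lt_top _ _)

end Generated

/-- The sum of the four Jordan parts of `μ`; it dominates `|μ|` and takes its place below. -/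
def jordanSum (μ : ComplexMeasure (Euc d)) : Measure (Euc d) :=
  (ComplexMeasure.re μ).toJordanDecomposition.posPart +
    (ComplexMeasure.re μ).toJordanDecomposition.negPart +
    (ComplexMeasure.im μ).toJordanDecomposition.posPart +
    (ComplexMeasure.im μ).toJordanDecomposition.negPart

instance (μ : ComplexMeasure (Euc d)) : IsFiniteMeasure (jordanSum μ) := by
  unfold jordanSum; infer_instance

lemma enorm_cInt_le (μ : ComplexMeasure (Euc d)) (f : Euc d → ℂ) :
    ‖cInt μ f‖ₑ ≤ ∫⁻ y, ‖f y‖ₑ ∂jordanSum μ := by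
  have hI : ‖Complex.I‖ₑ = 1 := by simp [enorm_eq_nnnorm]
  simp only [jordanSum, lintegral_add_measure, cInt]
  refine (enorm_add_le _ _).trans ?_
  rw [enorm_mul, hI, one_mul, add_assoc]
  gcongr <;> exact enorm_sub_le.trans (add_le_add (enorm_integral_le_lintegral_enorm _)
    (enorm_integral_le_lintegral_enorm _))

lemma cInt_sub {μ : ComplexMeasure (Euc d)} {f g : Euc d → ℂ} (hf : Integrable f (jordanSum μ))
    (hg : Integrable g (jordanSum μ)) : cInt μ (f - g) = cInt μ f - cInt μ g := by
  simp only [jordanSum, integrable_add_measure] at hf hg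
  simp only [cInt, Pi.sub_apply]
  rw [integral_sub hf.1.1.1 hg.1.1.1, integral_sub hf.1.1.2 hg.1.1.2,
    integral_sub hf.1.2 hg.1.2, integral_sub hf.2 hg.2]
  ring

lemma norm_le_of_iSup_nnnorm_lt {J E : Type*} [SeminormedAddGroup E] {Δ : J → E} {γ : ℝ}
    (hγ : 0 ≤ γ) (h : (⨆ j, (‖Δ j‖₊ : ℝ≥0∞)) < ENNReal.ofReal γ) (j : J) : ‖Δ j‖ ≤ γ := by
  rw [← ofReal_le_ofReal_iff hγ, ofReal_norm, enorm_eq_nnnorm]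
  exact (le_iSup (fun j => (‖Δ j‖₊ : ℝ≥0∞)) j).trans h.le

section Jitter

variable {r : ℕ} {p : ℝ≥0∞} {Φ : Fin r → Euc d → ℂ} {C : Fin r → (Fin d → ℤ) → ℂ}

lemma enorm_mconv_sub_le (hp : p ≠ 0) (hΦ : ∀ i, Continuous (Φ i))
    (hfin : ∑ i, lpNorm p (C i) * amalgamSum 0 1 (fun y => ‖Φ i y‖ₑ) ≠ ∞)
    (μ : ComplexMeasure (Euc d)) {γ : ℝ} {Δ : Euc d} (hΔ : ‖Δ‖ ≤ γ) (x : Euc d) :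
    ‖mconv μ (genFun Φ C) x - mconv μ (genFun Φ C) (x + Δ)‖ₑ ≤
      ∑' ik : Fin r × (Fin d → ℤ),
        ‖C ik.1 ik.2‖ₑ * ∫⁻ y, osc (Φ ik.1) γ (x - zemb ik.2 - y) ∂jordanSum μ := by
  have hint := integrable_genFun_comp_sub hp hΦ hfin (jordanSum μ)
  have hmeas (ik : Fin r × (Fin d → ℤ)) :
      Measurable fun y => osc (Φ ik.1) γ (x - zemb ik.2 - y) :=
    (measurable_osc (hΦ ik.1) γ).comp (measurable_const.sub measurable_id)
  rw [mconv, mconv, ← cInt_sub (hint x) (hint (x + Δ))]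
  calc _ ≤ ∫⁻ y, ‖genFun Φ C (x - y) - genFun Φ C (x + Δ - y)‖ₑ ∂jordanSum μ :=
        enorm_cInt_le _ _
    _ ≤ ∫⁻ y, ∑' ik : Fin r × (Fin d → ℤ),
          ‖C ik.1 ik.2‖ₑ * osc (Φ ik.1) γ (x - zemb ik.2 - y) ∂jordanSum μ := by
        refine lintegral_mono fun y => ?_
        rw [enorm_sub_rev, show x + Δ - y = x - y + Δ by abel]
        simpa only [sub_right_comm x y] using enorm_genFun_add_sub_le hp hfin hΔ (x - y)
    _ = _ := by
        rw [lintegral_tsum fun ik => ((hmeas ik).const_mul _).aemeasurable]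
        exact tsum_congr fun ik => lintegral_const_mul _ (hmeas ik)

/-- The Schur test for the kernel `(j, (i, k)) ↦ ∫ osc_γ φ^i (x_j - k - y) d|μ|(y)`, with `N + 1`
dominating both the factor `N` of the column sums and the factor `1` of the row sums. -/
theorem lpNorm_mconv_sub_le {J : Type*} {X : J → Euc d} {N : ℕ}
    (hN : ∀ m, {j | floorVec (X j) = m}.encard ≤ N) (hp : 1 ≤ p)
    (hΦ : ∀ i, Continuous (Φ i)) (hΦfin : ∀ i, amalgamSum 0 1 (fun y => ‖Φ i y‖ₑ) ≠ ∞)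
    (hC : vlpNorm p C ≠ ∞) (μ : ComplexMeasure (Euc d)) {γ : ℝ} {Δ : J → Euc d}
    (hΔ : ∀ j, ‖Δ j‖ ≤ γ) :
    lpNorm p (fun j => mconv μ (genFun Φ C) (X j) - mconv μ (genFun Φ C) (X j + Δ j)) ≤
      (N + 1) * jordanSum μ Set.univ * (∑ i, amalgamSum (-1) 1 (osc (Φ i) γ)) *
        vlpNorm p C := by
  have hfin := sum_lpNorm_mul_amalgamSum_ne_top hΦfin hC
  have hp0 : p ≠ 0 := (zero_lt_one.trans_le hp).ne'
  set θ := jordanSum μ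
  set S := ∑ i, amalgamSum (-1) 1 (osc (Φ i) γ)
  set R : ℝ≥0∞ := (N + 1) * θ Set.univ * S
  let T (i : Fin r) (w : Euc d) : ℝ≥0∞ := ∫⁻ y, osc (Φ i) γ (w - y) ∂θ
  have hT (i : Fin r) : amalgamSum 0 1 (T i) ≤ θ Set.univ * S :=
    (amalgamSum_lintegral_comp_sub_le θ _).trans <| by
      gcongr
      exact Finset.single_le_sum (f := fun i => amalgamSum (-1) 1 (osc (Φ i) γ))
        (fun _ _ => zero_le) (Finset.mem_univ i)
  have hR : θ Set.univ * S ≤ R := by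
    rw [show R = (N + 1) * (θ Set.univ * S) from mul_assoc _ _ _]
    exact le_mul_of_one_le_left' le_add_self
  have hrow (j : J) : ∑' ik : Fin r × (Fin d → ℤ), T ik.1 (X j - zemb ik.2) ≤ R :=
    calc ∑' ik : Fin r × (Fin d → ℤ), T ik.1 (X j - zemb ik.2)
        ≤ ∑ i, θ Set.univ * amalgamSum (-1) 1 (osc (Φ i) γ) :=
          (tsum_prod_comp_sub_zemb_le T (X j)).trans
            (Finset.sum_le_sum fun i _ => amalgamSum_lintegral_comp_sub_le θ _)
      _ ≤ R := by rw [← Finset.mul_sum]; exact hR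
  have hcol (ik : Fin r × (Fin d → ℤ)) : ∑' j, T ik.1 (X j - zemb ik.2) ≤ R :=
    calc ∑' j, T ik.1 (X j - zemb ik.2) ≤ N * amalgamSum 0 1 (T ik.1) :=
          tsum_comp_sub_zemb_le_mul_amalgamSum hN _ _
      _ ≤ R := by
          rw [show R = (N + 1) * (θ Set.univ * S) from mul_assoc _ _ _]
          gcongr
          · exact le_self_add
          · exact hT ik.1
  calc lpNorm p (fun j => mconv μ (genFun Φ C) (X j) - mconv μ (genFun Φ C) (X j + Δ j))
      ≤ elpNorm p (fun j => ∑' ik : Fin r × (Fin d → ℤ),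
          ‖C ik.1 ik.2‖ₑ * T ik.1 (X j - zemb ik.2)) :=
        elpNorm_mono fun j => enorm_mconv_sub_le hp0 hΦ hfin μ (hΔ j) (X j)
    _ ≤ R * elpNorm p (fun ik : Fin r × (Fin d → ℤ) => ‖C ik.1 ik.2‖ₑ) :=
        elpNorm_tsum_mul_le hp _ _ hrow hcol
    _ ≤ R * vlpNorm p C := by gcongr; exact elpNorm_le_sum hp _

end Jitter

end SamplingJitter

end

open SamplingJitter Filter Topology

open MeasureTheory ENNReal in
theorem sampling_operator_jitter_continuity_general
    (d r t : ℕ) (p : ℝ≥0∞) (hp : 1 ≤ p) (J : Type)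
    (Φ : Fin r → Euc d → ℂ) (hΦ : ∀ i, MemW01 (Φ i))
    (μ : Fin t → ComplexMeasure (Euc d))
    (X : J → Euc d) (hsep : SeparatedSet X) :
    ∀ ε : ℝ, 0 < ε → ∃ γ : ℝ, 0 < γ ∧
      ∀ Δ : J → Euc d, (⨆ j : J, (‖Δ j‖₊ : ℝ≥0∞)) < ENNReal.ofReal γ →
        ∀ C : Fin r → (Fin d → ℤ) → ℂ, vlpNorm p C < ∞ →
          ∑ l, lpNorm p (fun j =>
              mconv (μ l) (genFun Φ C) (X j) - mconv (μ l) (genFun Φ C) (X j + Δ j)) ≤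
            ENNReal.ofReal ε * vlpNorm p C := by
  obtain ⟨δ, hδ, hX⟩ := hsep
  obtain ⟨N, hN⟩ := exists_encard_floorVec_fiber_le hδ hX
  have hΦfin (i : Fin r) : amalgamSum 0 1 (fun x => ‖Φ i x‖ₑ) ≠ ∞ :=
    ne_top_of_le_ne_top (hΦ i).2.ne (amalgamSum_le_WNorm (hΦ i).1)
  set M : ℝ≥0∞ := (N + 1) * ∑ l, jordanSum (μ l) Set.univ
  have hM : M ≠ ∞ := ENNReal.mul_ne_top (by simp) (ENNReal.sum_ne_top.2 fun _ _ =>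
    measure_ne_top _ _)
  have hlim : Tendsto (fun γ => M * ∑ i, amalgamSum (-1) 1 (osc (Φ i) γ)) (𝓝[>] 0) (𝓝 0) := by
    simpa using ENNReal.Tendsto.const_mul (tendsto_finsetSum _ fun i _ =>
      tendsto_amalgamSum_osc (hΦ i).1 (hΦfin i)) (Or.inr hM)
  intro ε hε
  obtain ⟨γ, hγε, hγ⟩ :=
    ((hlim.eventually (gt_mem_nhds (ofReal_pos.2 hε))).and self_mem_nhdsWithin).exists
  refine ⟨γ, hγ, fun Δ hΔ C hC => ?_⟩
  calc ∑ l, lpNorm p (fun j =>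
          mconv (μ l) (genFun Φ C) (X j) - mconv (μ l) (genFun Φ C) (X j + Δ j))
      ≤ ∑ l, (N + 1) * jordanSum (μ l) Set.univ * (∑ i, amalgamSum (-1) 1 (osc (Φ i) γ)) *
          vlpNorm p C := Finset.sum_le_sum fun l _ =>
        lpNorm_mconv_sub_le hN hp (fun i => (hΦ i).1) hΦfin hC.ne (μ l)
          (norm_le_of_iSup_nnnorm_lt hγ.le hΔ)
    _ = M * (∑ i, amalgamSum (-1) 1 (osc (Φ i) γ)) * vlpNorm p C := by
        rw [← Finset.sum_mul, ← Finset.sum_mul, ← Finset.mul_sum]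
    _ ≤ ENNReal.ofReal ε * vlpNorm p C := by gcongr

open MeasureTheory ENNReal in
/-- Lemma 5.1: the sampling operator depends continuously on jitter:
`‖U - U_Δ‖ → 0` as `sup_j |δ_j| → 0`. -/
theorem sampling_operator_jitter_continuity
    (d r t : ℕ) (p : ℝ≥0∞) (hp : 1 ≤ p) (J : Type) [Countable J]
    (Φ : Fin r → Euc d → ℂ) (hΦ : ∀ i, MemW01 (Φ i))
    (μ : Fin t → ComplexMeasure (Euc d))
    (X : J → Euc d) (hsep : SeparatedSet X) :
    ∀ ε : ℝ, 0 < ε → ∃ γ : ℝ, 0 < γ ∧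
      ∀ Δ : J → Euc d, (⨆ j : J, (‖Δ j‖₊ : ℝ≥0∞)) < ENNReal.ofReal γ →
        ∀ C : Fin r → (Fin d → ℤ) → ℂ, vlpNorm p C < ∞ →
          ∑ l, lpNorm p (fun j =>
              mconv (μ l) (genFun Φ C) (X j) - mconv (μ l) (genFun Φ C) (X j + Δ j)) ≤
            ENNReal.ofReal ε * vlpNorm p C :=
  sampling_operator_jitter_continuity_general d r t p hp J Φ hΦ μ X hsep
end

section
/- Let H and K be complex Hilbert spaces, let 0<η≤β<∞, and let U:H→K be a bounded linear operator satisfying η‖x‖ ≤ ‖Ux‖ ≤ β‖x‖ for all x∈H, so that U*U is boundedly invertible. Let ε ∈ (0, −β+√(β²+η²)), let V:H→K be a bounded linear operator with ‖U−V‖ < ε, and set ν = ε(ε+2β)/η². Then 0<ν<1, V*V is boundedly invertible, and ‖(U*U)^{-1} − (V*V)^{-1}‖ < ν/(η²(1−ν)). -/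
open ContinuousLinearMap RCLike
open scoped InnerProductSpace

section Aux
variable {H K : Type*} [NormedAddCommGroup H] [InnerProductSpace ℂ H] [CompleteSpace H]
  [NormedAddCommGroup K] [InnerProductSpace ℂ K] [CompleteSpace K]

lemma aux_lower (U : H →L[ℂ] K) (η : ℝ) (hη : 0 ≤ η) (hU : ∀ x : H, η * ‖x‖ ≤ ‖U x‖) (x : H) :
    η ^ 2 * ‖x‖ ≤ ‖(adjoint U ∘L U) x‖ := by
  rcases eq_or_ne x 0 with rfl | hx
  · simp
  have hx' : 0 < ‖x‖ := norm_pos_iff.mpr hx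
  have h1 : η ^ 2 * ‖x‖ ^ 2 ≤ ‖U x‖ ^ 2 := by
    have h := hU x
    nlinarith [norm_nonneg (U x), norm_nonneg x, mul_nonneg hη (norm_nonneg x)]
  have h2 : (‖U x‖ : ℝ) ^ 2 = re (⟪(adjoint U ∘L U) x, x⟫_ℂ) := by
    rw [comp_apply, adjoint_inner_left, inner_self_eq_norm_sq]
  have h3 : re (⟪(adjoint U ∘L U) x, x⟫_ℂ) ≤ ‖(adjoint U ∘L U) x‖ * ‖x‖ :=
    re_inner_le_norm _ _
  have key : η ^ 2 * ‖x‖ * ‖x‖ ≤ ‖(adjoint U ∘L U) x‖ * ‖x‖ := by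
    have := h1.trans (h2.le.trans h3)
    nlinarith
  exact le_of_mul_le_mul_right key hx'

/-- The inverse of `adjoint U ∘L U` for a bounded-below, bounded-above `U`. -/
lemma aux_unit (U : H →L[ℂ] K) (η β : ℝ) (hη : 0 < η) (hηβ : η ≤ β)
    (hU : ∀ x : H, η * ‖x‖ ≤ ‖U x‖ ∧ ‖U x‖ ≤ β * ‖x‖) :
    ∃ W : H →L[ℂ] H, W * (adjoint U ∘L U) = 1 ∧ (adjoint U ∘L U) * W = 1 := by
  have hβ : 0 < β := hη.trans_le hηβ
  set S : H →L[ℂ] H := adjoint U ∘L U with hSdef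
  have hUn : ‖U‖ ≤ β := opNorm_le_bound _ hβ.le fun x => (hU x).2
  have hadj : ‖adjoint U‖ = ‖U‖ := LinearIsometryEquiv.norm_map adjoint U
  set c : ℝ := (β ^ 2)⁻¹ with hc
  have hc0 : 0 < c := by positivity
  set t : H →L[ℂ] H := 1 - (c : ℂ) • S with htdef
  have hr0 : (0:ℝ) ≤ 1 - η ^ 2 / β ^ 2 := by
    rw [sub_nonneg, div_le_one (by positivity)]
    nlinarith
  have hUUre : ∀ x : H, re (⟪S x, x⟫_ℂ) = ‖U x‖ ^ 2 := by
    intro x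
    rw [hSdef, comp_apply, adjoint_inner_left, inner_self_eq_norm_sq]
  have hpt : ∀ x : H, ‖t x‖ ^ 2 ≤ (1 - η ^ 2 / β ^ 2) * ‖x‖ ^ 2 := by
    intro x
    have hSx : ‖S x‖ ≤ β * ‖U x‖ := by
      calc ‖S x‖ = ‖adjoint U (U x)‖ := rfl
        _ ≤ ‖adjoint U‖ * ‖U x‖ := le_opNorm _ _
        _ ≤ β * ‖U x‖ := mul_le_mul_of_nonneg_right (hadj ▸ hUn) (norm_nonneg _)
    have hre : re (⟪x, ((c : ℂ) • S) x⟫_ℂ) = c * ‖U x‖ ^ 2 := by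
      rw [smul_apply, inner_smul_right]
      rw [RCLike.re_to_complex, Complex.re_ofReal_mul, ← RCLike.re_to_complex,
        inner_re_symm, hUUre]
    have hn : ‖((c : ℂ) • S) x‖ = c * ‖S x‖ := by
      rw [smul_apply, norm_smul]
      norm_num [abs_of_nonneg hc0.le]
    have hs : ‖t x‖ ^ 2 = ‖x‖ ^ 2 - 2 * (c * ‖U x‖ ^ 2) + (c * ‖S x‖) ^ 2 := by
      have htx : t x = x - ((c : ℂ) • S) x := by simp [htdef]
      rw [htx, norm_sub_sq (𝕜 := ℂ), hre, hn]
    have hcb : c * β ^ 2 = 1 := by rw [hc]; field_simp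
    have e1 : (c * ‖S x‖) ^ 2 ≤ c * ‖U x‖ ^ 2 := by
      have h0 : (c * ‖S x‖) ^ 2 ≤ (c * (β * ‖U x‖)) ^ 2 := by
        apply pow_le_pow_left₀ (by positivity)
        exact mul_le_mul_of_nonneg_left hSx hc0.le
      calc (c * ‖S x‖) ^ 2 ≤ (c * (β * ‖U x‖)) ^ 2 := h0
        _ = c * ‖U x‖ ^ 2 * (c * β ^ 2) := by ring
        _ = c * ‖U x‖ ^ 2 := by rw [hcb, mul_one]
    have e2 : c * (η ^ 2 * ‖x‖ ^ 2) ≤ c * ‖U x‖ ^ 2 := by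
      apply mul_le_mul_of_nonneg_left ?_ hc0.le
      have h := (hU x).1
      nlinarith [norm_nonneg (U x), norm_nonneg x, mul_nonneg hη.le (norm_nonneg x)]
    have e3 : η ^ 2 / β ^ 2 * ‖x‖ ^ 2 = c * (η ^ 2 * ‖x‖ ^ 2) := by rw [hc]; ring
    rw [hs, sub_mul, one_mul, e3]
    linarith
  set r : ℝ := Real.sqrt (1 - η ^ 2 / β ^ 2) with hrdef
  have htle : ‖t‖ ≤ r := by
    apply opNorm_le_bound _ (Real.sqrt_nonneg _)
    intro x
    have := Real.sqrt_le_sqrt (hpt x)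
    rwa [Real.sqrt_sq (norm_nonneg _), Real.sqrt_mul hr0,
      Real.sqrt_sq (norm_nonneg _)] at this
  have ht1 : ‖t‖ < 1 := by
    refine htle.trans_lt ?_
    rw [hrdef, Real.sqrt_lt' one_pos, one_pow]
    have : 0 < η ^ 2 / β ^ 2 := by positivity
    linarith
  set u1 := Units.oneSub t ht1 with hu1
  have hval : (u1 : H →L[ℂ] H) = (c : ℂ) • S := by
    simp [hu1, htdef]
  refine ⟨(c : ℂ) • (↑u1⁻¹ : H →L[ℂ] H), ?_, ?_⟩
  · calc ((c : ℂ) • (↑u1⁻¹ : H →L[ℂ] H)) * S = (↑u1⁻¹ : H →L[ℂ] H) * ((c : ℂ) • S) := by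
          rw [smul_mul_assoc, mul_smul_comm]
      _ = (↑u1⁻¹ : H →L[ℂ] H) * u1 := by rw [hval]
      _ = 1 := u1.inv_mul
  · calc S * ((c : ℂ) • (↑u1⁻¹ : H →L[ℂ] H)) = ((c : ℂ) • S) * (↑u1⁻¹ : H →L[ℂ] H) := by
          rw [smul_mul_assoc, mul_smul_comm]
      _ = (u1 : H →L[ℂ] H) * ↑u1⁻¹ := by rw [hval]
      _ = 1 := u1.mul_inv

end Aux

set_option maxHeartbeats 1600000 in
open ContinuousLinearMap in
/-- Lemma 5.3: perturbation bound for the inverse `(U*U)⁻¹`.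
Inverses of `U*U` and `V*V` are expressed as two-sided continuous linear inverses
(which are necessarily unique). -/
theorem inverse_frame_operator_perturbation
    {H K : Type*} [NormedAddCommGroup H] [InnerProductSpace ℂ H] [CompleteSpace H]
    [NormedAddCommGroup K] [InnerProductSpace ℂ K] [CompleteSpace K]
    (η β : ℝ) (hη : 0 < η) (hηβ : η ≤ β)
    (U : H →L[ℂ] K) (hU : ∀ x : H, η * ‖x‖ ≤ ‖U x‖ ∧ ‖U x‖ ≤ β * ‖x‖)
    (ε : ℝ) (hε0 : 0 < ε) (hεlt : ε < -β + Real.sqrt (β ^ 2 + η ^ 2))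
    (V : H →L[ℂ] K) (hUV : ‖U - V‖ < ε) :
    (0 < ε * (ε + 2 * β) / η ^ 2 ∧ ε * (ε + 2 * β) / η ^ 2 < 1) ∧
    (∃ W : H →L[ℂ] H, W ∘L (adjoint U ∘L U) = ContinuousLinearMap.id ℂ H ∧
        (adjoint U ∘L U) ∘L W = ContinuousLinearMap.id ℂ H) ∧
    (∃ W : H →L[ℂ] H, W ∘L (adjoint V ∘L V) = ContinuousLinearMap.id ℂ H ∧
        (adjoint V ∘L V) ∘L W = ContinuousLinearMap.id ℂ H) ∧
    ∀ WU WV : H →L[ℂ] H,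
      (WU ∘L (adjoint U ∘L U) = ContinuousLinearMap.id ℂ H ∧
        (adjoint U ∘L U) ∘L WU = ContinuousLinearMap.id ℂ H) →
      (WV ∘L (adjoint V ∘L V) = ContinuousLinearMap.id ℂ H ∧
        (adjoint V ∘L V) ∘L WV = ContinuousLinearMap.id ℂ H) →
      ‖WU - WV‖ <
        (ε * (ε + 2 * β) / η ^ 2) / (η ^ 2 * (1 - ε * (ε + 2 * β) / η ^ 2)) := by
  have hβ : 0 < β := hη.trans_le hηβ
  set S : H →L[ℂ] H := adjoint U ∘L U with hS
  set T : H →L[ℂ] H := adjoint V ∘L V with hT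
  set ν : ℝ := ε * (ε + 2 * β) / η ^ 2 with hν
  have hνnum : 0 < ε * (ε + 2 * β) := mul_pos hε0 (by linarith)
  have hν0 : 0 < ν := div_pos hνnum (by positivity)
  have hsq : ε * (ε + 2 * β) < η ^ 2 := by
    have h1 : ε + β < Real.sqrt (β ^ 2 + η ^ 2) := by linarith
    have h2 : (ε + β) ^ 2 < β ^ 2 + η ^ 2 := (Real.lt_sqrt (by positivity)).mp h1
    nlinarith
  have hν1 : ν < 1 := (div_lt_one (by positivity)).mpr hsq
  have hUn : ‖U‖ ≤ β := opNorm_le_bound _ hβ.le fun x => (hU x).2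
  have hVn : ‖V‖ ≤ β + ε := by
    have h1 : ‖V‖ ≤ ‖U‖ + ‖U - V‖ := by
      calc ‖V‖ = ‖U - (U - V)‖ := by congr 1; abel
        _ ≤ ‖U‖ + ‖U - V‖ := norm_sub_le _ _
    linarith
  have hST : ‖S - T‖ < ε * (ε + 2 * β) := by
    have hsplit : S - T = (adjoint U) ∘L (U - V) + (adjoint (U - V)) ∘L V := by
      ext x
      simp only [hS, hT, sub_apply, add_apply, comp_apply, map_sub]
      abel
    have h1 : ‖(adjoint U) ∘L (U - V)‖ ≤ β * ‖U - V‖ := by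
      calc ‖(adjoint U) ∘L (U - V)‖ ≤ ‖adjoint U‖ * ‖U - V‖ := opNorm_comp_le _ _
        _ ≤ β * ‖U - V‖ :=
            mul_le_mul_of_nonneg_right ((LinearIsometryEquiv.norm_map adjoint U) ▸ hUn)
              (norm_nonneg _)
    have h2 : ‖(adjoint (U - V)) ∘L V‖ ≤ ‖U - V‖ * (β + ε) := by
      calc ‖(adjoint (U - V)) ∘L V‖ ≤ ‖adjoint (U - V)‖ * ‖V‖ := opNorm_comp_le _ _
        _ = ‖U - V‖ * ‖V‖ := by rw [LinearIsometryEquiv.norm_map adjoint (U - V)]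
        _ ≤ ‖U - V‖ * (β + ε) := mul_le_mul_of_nonneg_left hVn (norm_nonneg _)
    calc ‖S - T‖ ≤ ‖(adjoint U) ∘L (U - V)‖ + ‖(adjoint (U - V)) ∘L V‖ :=
          hsplit ▸ norm_add_le _ _
      _ ≤ β * ‖U - V‖ + ‖U - V‖ * (β + ε) := add_le_add h1 h2
      _ < ε * (ε + 2 * β) := by nlinarith [norm_nonneg (U - V)]
  obtain ⟨W, hWS, hSW⟩ := aux_unit U η β hη hηβ hU
  rw [← hS] at hWS hSW
  have hWnorm : ‖W‖ ≤ (η ^ 2)⁻¹ := by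
    apply opNorm_le_bound _ (by positivity)
    intro y
    have h := aux_lower U η hη.le (fun x => (hU x).1) (W y)
    have hSWy : S (W y) = y := by
      have h' : (S * W) y = (1 : H →L[ℂ] H) y := by rw [hSW]
      simpa [mul_apply] using h'
    rw [show ((adjoint U ∘L U) : H →L[ℂ] H) (W y) = S (W y) from rfl, hSWy] at h
    calc ‖W y‖ = (η ^ 2)⁻¹ * (η ^ 2 * ‖W y‖) := by field_simp
      _ ≤ (η ^ 2)⁻¹ * ‖y‖ := mul_le_mul_of_nonneg_left h (by positivity)
  set t2 : H →L[ℂ] H := W * (S - T) with ht2def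
  have ht2 : ‖t2‖ ≤ (η ^ 2)⁻¹ * ‖S - T‖ :=
    le_trans (norm_mul_le _ _) (mul_le_mul_of_nonneg_right hWnorm (norm_nonneg _))
  have ht2ν : ‖t2‖ < ν := by
    refine lt_of_le_of_lt ht2 ?_
    have h : (η ^ 2)⁻¹ * ‖S - T‖ < (η ^ 2)⁻¹ * (ε * (ε + 2 * β)) :=
      mul_lt_mul_of_pos_left hST (by positivity)
    rw [hν, div_eq_inv_mul]
    exact h
  have ht21 : ‖t2‖ < 1 := ht2ν.trans hν1
  set u2 := Units.oneSub t2 ht21 with hu2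
  have hu2val : (↑u2 : H →L[ℂ] H) = 1 - t2 := rfl
  have hWT : W * T = 1 - t2 := by
    have : W * (S - T) = 1 - W * T := by rw [mul_sub, hWS]
    rw [ht2def, this]
    abel
  have hTS : T = S * (1 - t2) := by
    calc T = S - (S - T) := by abel
      _ = S - (S * W) * (S - T) := by rw [hSW, one_mul]
      _ = S - S * (W * (S - T)) := by rw [mul_assoc]
      _ = S * (1 - t2) := by rw [ht2def]; noncomm_ring
  set W2 : H →L[ℂ] H := ↑u2⁻¹ * W with hW2
  have hW2T : W2 * T = 1 := by
    rw [hW2, mul_assoc, hWT, ← hu2val]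
    exact u2.inv_mul
  have hTW2 : T * W2 = 1 := by
    calc T * W2 = (S * (1 - t2)) * ((↑u2⁻¹ : H →L[ℂ] H) * W) := by rw [hTS, hW2]
      _ = S * (((1 - t2) * (↑u2⁻¹ : H →L[ℂ] H)) * W) := by
          rw [mul_assoc, mul_assoc]
      _ = S * W := by rw [← hu2val, u2.mul_inv, one_mul]
      _ = 1 := hSW
  have hu2inv : ‖(↑u2⁻¹ : H →L[ℂ] H)‖ ≤ (1 - ν)⁻¹ := by
    have hval : (↑u2⁻¹ : H →L[ℂ] H) = ∑' n : ℕ, t2 ^ n := rfl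
    have h1 : ‖(↑u2⁻¹ : H →L[ℂ] H)‖ ≤ ‖(1 : H →L[ℂ] H)‖ - 1 + (1 - ‖t2‖)⁻¹ := by
      rw [hval]; exact tsum_geometric_le_of_norm_lt_one t2 ht21
    have h2 : ‖(1 : H →L[ℂ] H)‖ ≤ 1 := by rw [one_def]; exact norm_id_le
    have h3 : (1 - ‖t2‖)⁻¹ ≤ (1 - ν)⁻¹ := by
      gcongr <;> linarith
    linarith
  have hν1' : (0:ℝ) < 1 - ν := by linarith
  have hW2norm : ‖W2‖ ≤ (1 - ν)⁻¹ * (η ^ 2)⁻¹ :=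
    le_trans (norm_mul_le _ _) (mul_le_mul hu2inv hWnorm (norm_nonneg _) (by positivity))
  clear_value t2 u2 W2
  have hkey : W - W2 = W * (T - S) * W2 := by
    have : W * (T - S) * W2 = W - W2 := by
      calc W * (T - S) * W2 = (W * T) * W2 - (W * S) * W2 := by rw [mul_sub, sub_mul]
        _ = W * (T * W2) - 1 * W2 := by rw [mul_assoc, hWS]
        _ = W - W2 := by rw [hTW2, mul_one, one_mul]
    exact this.symm
  have hfinal : ‖W - W2‖ < ν / (η ^ 2 * (1 - ν)) := by
    have h1 : ‖W - W2‖ ≤ ‖W‖ * ‖T - S‖ * ‖W2‖ := by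
      rw [hkey]
      exact le_trans (norm_mul_le _ _)
        (mul_le_mul_of_nonneg_right (norm_mul_le _ _) (norm_nonneg _))
    have h2 : ‖T - S‖ = ‖S - T‖ := norm_sub_rev _ _
    have h3 : ‖W‖ * ‖T - S‖ * ‖W2‖ ≤ (η ^ 2)⁻¹ * ‖S - T‖ * ((1 - ν)⁻¹ * (η ^ 2)⁻¹) := by
      rw [h2]
      apply mul_le_mul ?_ hW2norm (norm_nonneg _) (by positivity)
      exact mul_le_mul hWnorm le_rfl (norm_nonneg _) (by positivity)
    have h4 : (η ^ 2)⁻¹ * ‖S - T‖ * ((1 - ν)⁻¹ * (η ^ 2)⁻¹) <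
        (η ^ 2)⁻¹ * (ε * (ε + 2 * β)) * ((1 - ν)⁻¹ * (η ^ 2)⁻¹) := by
      have : (0:ℝ) < (1 - ν)⁻¹ * (η ^ 2)⁻¹ := by
        have : (0:ℝ) < 1 - ν := by linarith
        positivity
      exact mul_lt_mul_of_pos_right (mul_lt_mul_of_pos_left hST (by positivity)) this
    have h5 : (η ^ 2)⁻¹ * (ε * (ε + 2 * β)) * ((1 - ν)⁻¹ * (η ^ 2)⁻¹) =
        ν / (η ^ 2 * (1 - ν)) := by
      rw [hν]
      have hν' : (1:ℝ) - ε * (ε + 2 * β) / η ^ 2 ≠ 0 := by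
        have h6 : ε * (ε + 2 * β) / η ^ 2 < 1 := (div_lt_one (by positivity)).mpr hsq
        linarith [h6]
      field_simp
    linarith
  refine ⟨⟨hν0, hν1⟩, ⟨W, hWS, hSW⟩, ⟨W2, hW2T, hTW2⟩, ?_⟩
  intro WU WV hWU hWV
  have hWUeq : WU = W := by
    calc WU = WU * (S * W) := by rw [hSW, mul_one]
      _ = (WU * S) * W := (mul_assoc _ _ _).symm
      _ = W := by rw [show WU * S = 1 from hWU.1, one_mul]
  have hWVeq : WV = W2 := by
    calc WV = WV * (T * W2) := by rw [hTW2, mul_one]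
      _ = (WV * T) * W2 := (mul_assoc _ _ _).symm
      _ = W2 := by rw [show WV * T = 1 from hWV.1, one_mul]
  rw [hWUeq, hWVeq]
  exact hfinal
end
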